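/- arXiv:1503.08705 — 2 statements merged into one kernel-verified Lean document; each statement's English description precedes it below -/
import Mathlib

section
/- Let R be a commutative ring with unit. Given pairwise orthogonal projections p_1, p_2, …, p_n in L_{2,R}, each Murray–von Neumann equivalent to 1, there exist elements t_1, t_2, …, t_n in L_{2,R} such that: (1) t_i* t_i = p_{i+1} for i < n and t_n* t_n = p_1; (2) t_i t_i* = p_i for all i; (3) t_i t_i* t_i = t_i for all i; and (4) v = t_1 t_2 ⋯ t_n is a full spectrum partial unitary with vv* = p_1 = v*v. -/
set_option synthInstance.maxHeartbeats 1000000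
set_option maxHeartbeats 1000000

/-- The four generators `a, a*, b, b*` of the Leavitt algebra `L_{2,R}`. -/
inductive L2Gen : Type
  | a : L2Gen
  | astar : L2Gen
  | b : L2Gen
  | bstar : L2Gen

open FreeAlgebra

/-- The defining relations of `L_{2,R}`: `a*a = b*b = 1 = aa* + bb*`. -/
inductive L2Rel (R : Type) [CommRing R] : FreeAlgebra R L2Gen → FreeAlgebra R L2Gen → Prop
  | a_adj : L2Rel R (ι R .astar * ι R .a) 1
  | b_adj : L2Rel R (ι R .bstar * ι R .b) 1
  | ck : L2Rel R (ι R .a * ι R .astar + ι R .b * ι R .bstar) 1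

/-- The Leavitt algebra `L_{2,R}`: the universal unital `R`-algebra generated by
`a, a*, b, b*` subject to `a*a = b*b = 1 = aa* + bb*`. -/
abbrev L2 (R : Type) [CommRing R] : Type := RingQuot (L2Rel R)

variable (R : Type) [CommRing R]

/-- The generator `a` of `L_{2,R}`. -/
def La : L2 R := RingQuot.mkAlgHom R (L2Rel R) (ι R .a)

/-- The generator `b` of `L_{2,R}`. -/
def Lb : L2 R := RingQuot.mkAlgHom R (L2Rel R) (ι R .b)

/-- The generator `a*` of `L_{2,R}`. -/
def Lastar : L2 R := RingQuot.mkAlgHom R (L2Rel R) (ι R .astar)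

/-- The generator `b*` of `L_{2,R}`. -/
def Lbstar : L2 R := RingQuot.mkAlgHom R (L2Rel R) (ι R .bstar)

namespace L2

/-- The involution on the generators. -/
def starGen : L2Gen → L2Gen
  | .a => .astar
  | .astar => .a
  | .b => .bstar
  | .bstar => .b

/-- The auxiliary algebra homomorphism `L_{2,R} → L_{2,R}ᵐᵒᵖ` implementing the involution. -/
noncomputable def starMapAux : L2 R →ₐ[R] (L2 R)ᵐᵒᵖ :=
  RingQuot.liftAlgHom R
    ⟨FreeAlgebra.lift R fun g =>
      MulOpposite.op (RingQuot.mkAlgHom R (L2Rel R) (ι R (starGen g))), by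
      intro x y h
      induction h with
      | a_adj =>
          rw [map_one, map_mul, FreeAlgebra.lift_ι_apply, FreeAlgebra.lift_ι_apply,
            ← MulOpposite.op_mul, ← map_mul]
          simp only [starGen]
          rw [RingQuot.mkAlgHom_rel R L2Rel.a_adj, map_one, MulOpposite.op_one]
      | b_adj =>
          rw [map_one, map_mul, FreeAlgebra.lift_ι_apply, FreeAlgebra.lift_ι_apply,
            ← MulOpposite.op_mul, ← map_mul]
          simp only [starGen]
          rw [RingQuot.mkAlgHom_rel R L2Rel.b_adj, map_one, MulOpposite.op_one]
      | ck =>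
          rw [map_one, map_add, map_mul, map_mul, FreeAlgebra.lift_ι_apply,
            FreeAlgebra.lift_ι_apply, FreeAlgebra.lift_ι_apply, FreeAlgebra.lift_ι_apply,
            ← MulOpposite.op_mul, ← MulOpposite.op_mul, ← MulOpposite.op_add,
            ← map_mul, ← map_mul, ← map_add]
          simp only [starGen]
          rw [RingQuot.mkAlgHom_rel R L2Rel.ck, map_one, MulOpposite.op_one]⟩

lemma starMapAux_mk (x : FreeAlgebra R L2Gen) :
    starMapAux R (RingQuot.mkAlgHom R (L2Rel R) x) =
      FreeAlgebra.lift R (fun g =>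
        MulOpposite.op (RingQuot.mkAlgHom R (L2Rel R) (ι R (starGen g)))) x := by
  simp [starMapAux, RingQuot.liftAlgHom_mkAlgHom_apply]

lemma starMapAux_gen (g : L2Gen) :
    starMapAux R (RingQuot.mkAlgHom R (L2Rel R) (ι R g)) =
      MulOpposite.op (RingQuot.mkAlgHom R (L2Rel R) (ι R (starGen g))) := by
  rw [starMapAux_mk, FreeAlgebra.lift_ι_apply]

lemma starMapAux_starMapAux (x : L2 R) :
    (starMapAux R ((starMapAux R x).unop)).unop = x := by
  obtain ⟨y, rfl⟩ := RingQuot.mkAlgHom_surjective R (L2Rel R) x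
  induction y using FreeAlgebra.induction with
  | grade0 r =>
      simp only [AlgHom.commutes, MulOpposite.algebraMap_apply, MulOpposite.unop_op]
  | grade1 g =>
      rw [starMapAux_gen, MulOpposite.unop_op, starMapAux_gen, MulOpposite.unop_op]
      cases g <;> rfl
  | mul x y ihx ihy =>
      rw [map_mul, map_mul, MulOpposite.unop_mul, map_mul, MulOpposite.unop_mul, ihx, ihy]
  | add x y ihx ihy =>
      rw [map_add, map_add, MulOpposite.unop_add, map_add, MulOpposite.unop_add, ihx, ihy]

/-- The involution making `L_{2,R}` a `*`-algebra; it fixes `R`, and exchanges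
`a ↔ a*` and `b ↔ b*`. -/
noncomputable instance instStarRing : StarRing (L2 R) where
  star x := (starMapAux R x).unop
  star_involutive x := starMapAux_starMapAux R x
  star_mul x y := by
    show (starMapAux R (x * y)).unop = (starMapAux R y).unop * (starMapAux R x).unop
    rw [map_mul, MulOpposite.unop_mul]
  star_add x y := by
    show (starMapAux R (x + y)).unop = (starMapAux R x).unop + (starMapAux R y).unop
    rw [map_add, MulOpposite.unop_add]

lemma star_def (x : L2 R) : star x = (starMapAux R x).unop := rfl

@[simp] lemma star_La : star (La R) = Lastar R := by
  rw [star_def, La, Lastar, starMapAux_gen, MulOpposite.unop_op]; rfl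

@[simp] lemma star_Lb : star (Lb R) = Lbstar R := by
  rw [star_def, Lb, Lbstar, starMapAux_gen, MulOpposite.unop_op]; rfl

@[simp] lemma star_Lastar : star (Lastar R) = La R := by
  rw [star_def, La, Lastar, starMapAux_gen, MulOpposite.unop_op]; rfl

@[simp] lemma star_Lbstar : star (Lbstar R) = Lb R := by
  rw [star_def, Lb, Lbstar, starMapAux_gen, MulOpposite.unop_op]; rfl

/-- The involution on `L_{2,R}` is `R`-linear. -/
lemma star_smul' (r : R) (x : L2 R) : star (r • x) = r • star x := by
  show (starMapAux R (r • x)).unop = r • (starMapAux R x).unop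
  rw [map_smul, MulOpposite.unop_smul]

/-- The defining relations hold in `L_{2,R}`. -/
lemma astar_a : star (La R) * La R = 1 := by
  rw [star_La, Lastar, La, ← map_mul, RingQuot.mkAlgHom_rel R L2Rel.a_adj, map_one]

lemma bstar_b : star (Lb R) * Lb R = 1 := by
  rw [star_Lb, Lbstar, Lb, ← map_mul, RingQuot.mkAlgHom_rel R L2Rel.b_adj, map_one]

lemma ck_rel : La R * star (La R) + Lb R * star (Lb R) = 1 := by
  rw [star_La, star_Lb, La, Lastar, Lb, Lbstar, ← map_mul, ← map_mul, ← map_add,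
    RingQuot.mkAlgHom_rel R L2Rel.ck, map_one]

end L2

/-- A projection in an involutive algebra: `p = p² = p*`. -/
def IsProjection {A : Type} [Mul A] [Star A] (p : A) : Prop :=
  p * p = p ∧ star p = p

/-- Murray–von Neumann equivalence of projections: `p ∼ q` iff there is `x` with
`p = xx*` and `q = x*x`. -/
def MvNEquiv {A : Type} [Mul A] [Star A] (p q : A) : Prop :=
  ∃ x : A, p = x * star x ∧ q = star x * x

/-- A full spectrum partial unitary `u`: `u*u = uu* = p` is a projection, and for every
nonzero polynomial `q(x) = Σ_n r_n x^n ∈ R[x]` the element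
`q(u) = r_0 • p + Σ_{n ≥ 1} r_n • u^n` is nonzero. -/
def IsFullSpectrumPartialUnitary (R : Type) [CommRing R] {A : Type} [Ring A]
    [Algebra R A] [Star A] (u : A) : Prop :=
  (star u * u = u * star u) ∧ IsProjection (u * star u) ∧
  ∀ q : Polynomial R, q ≠ 0 →
    (q.sum fun n r => r • (if n = 0 then u * star u else u ^ n)) ≠ 0

open L2

/-!
Write `pᵢ = sᵢ sᵢ*` with `sᵢ* sᵢ = 1` and put `tᵢ = sᵢ w sᵢ₊₁*` for a unitary `w` of `L_{2,R}`
that is transcendental over `R`. The product telescopes to `v = s₁ wⁿ s₁*`, a copy of `wⁿ` in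
the corner `p₁ L_{2,R} p₁`, and compressing `q(v)` by `s₁*` gives back `q(wⁿ) ≠ 0`.
Transcendence of `w` is seen in the representation of `L_{2,R}` on `R[ℕ]` in which `a` and `b`
append the binary digits `0` and `1`: there `w` maps `e_{2^j}` to `e_{2^{j+1}}`.
-/

section Isometries

variable {A : Type} [Monoid A] [StarMul A] {s s' x : A}

lemma isProjection_mul_star_self (hs : star s * s = 1) : IsProjection (s * star s) :=
  ⟨by rw [mul_assoc, ← mul_assoc (star s), hs, one_mul], by rw [star_mul, star_star]⟩

lemma star_mul_self_of_isometries (hs : star s * s = 1) (hx : star x * x = 1) :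
    star (s * x * star s') * (s * x * star s') = s' * star s' := by
  simp only [star_mul, star_star, mul_assoc]
  rw [← mul_assoc (star s), hs, one_mul, ← mul_assoc (star x), hx, one_mul]

lemma mul_star_self_of_isometries (hs' : star s' * s' = 1) (hx : x * star x = 1) :
    s * x * star s' * star (s * x * star s') = s * star s := by
  simp only [star_mul, star_star, mul_assoc]
  rw [← mul_assoc (star s'), hs', one_mul, ← mul_assoc x, hx, one_mul]

lemma mul_star_self_mul_of_isometries (hs : star s * s = 1) (hs' : star s' * s' = 1)
    (hx : x * star x = 1) : s * x * star s' * star (s * x * star s') * (s * x * star s') =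
      s * x * star s' := by
  rw [mul_star_self_of_isometries hs' hx, mul_assoc, ← mul_assoc (star s), ← mul_assoc (star s),
    hs, one_mul, mul_assoc]

lemma conj_isometry_pow_succ (hs : star s * s = 1) (x : A) (n : ℕ) :
    (s * x * star s) ^ (n + 1) = s * x ^ (n + 1) * star s := by
  induction n with
  | zero => rw [zero_add, pow_one, pow_one]
  | succ n ih =>
    rw [pow_succ, ih, pow_succ x (n + 1)]
    simp only [mul_assoc]
    rw [← mul_assoc (star s), hs, one_mul]

lemma prod_ofFn_mul_mul_star_succ (S : ℕ → A) (hS : ∀ k, star (S k) * S k = 1) (x : A) (m : ℕ) :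
    (List.ofFn fun i : Fin (m + 1) => S i * x * star (S (i + 1))).prod =
      S 0 * x ^ (m + 1) * star (S (m + 1)) := by
  induction m with
  | zero => simp
  | succ m ih =>
    rw [List.ofFn_succ', List.prod_concat]
    simp only [Fin.val_castSucc, Fin.val_last]
    rw [ih]
    simp only [mul_assoc]
    rw [← mul_assoc (star (S (m + 1))), hS, one_mul, ← mul_assoc (x ^ (m + 1)), ← pow_succ]

end Isometries

theorem isFullSpectrumPartialUnitary_conj_isometry {A : Type} [Ring A] [StarRing A] [Algebra R A]
    {s x : A} (hs : star s * s = 1) (hx : x ∈ unitary A) (hxR : Transcendental R x) :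
    IsFullSpectrumPartialUnitary R (s * x * star s) := by
  have hxx : star x * x = 1 := Unitary.star_mul_self_of_mem hx
  have hvv : s * x * star s * star (s * x * star s) = s * star s :=
    mul_star_self_of_isometries hs (Unitary.mul_star_self_of_mem hx)
  refine ⟨by rw [star_mul_self_of_isometries hs hxx, hvv], hvv ▸ isProjection_mul_star_self hs,
    fun q hq hzero => hxR ⟨q, hq, ?_⟩⟩
  have hq_eval : (q.sum fun n r => r • (if n = 0 then s * x * star s * star (s * x * star s)
      else (s * x * star s) ^ n)) = s * Polynomial.aeval x q * star s := by
    rw [Polynomial.aeval_eq_smeval, Polynomial.smeval_eq_sum, Polynomial.sum_def,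
      Polynomial.sum_def, Finset.mul_sum, Finset.sum_mul]
    refine Finset.sum_congr rfl fun n _ => ?_
    rcases n with _ | n
    · rw [if_pos rfl, hvv]
      simp [Polynomial.smul_pow]
    · simp [conj_isometry_pow_succ hs, Polynomial.smul_pow]
  calc Polynomial.aeval x q = star s * (s * Polynomial.aeval x q * star s) * s := by
        simp only [← mul_assoc, hs, one_mul]; rw [mul_assoc, hs, mul_one]
    _ = 0 := by rw [← hq_eval, hzero, mul_zero, zero_mul]

theorem transcendental_of_linearIndependent_orbit {A M : Type*} [Ring A] [Algebra R A]
    [AddCommGroup M] [Module R M] (φ : A →ₐ[R] Module.End R M) (x : A) (v : M)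
    (h : LinearIndependent R fun n : ℕ => (φ x ^ n) v) : Transcendental R x := by
  rintro ⟨q, hq, hzero⟩
  refine hq ((Polynomial.linearIndependent_powers_iff_aeval _ v).1 h q ?_)
  rw [Polynomial.aeval_algHom_apply, hzero, map_zero, LinearMap.zero_apply]

namespace L2

lemma star_La_mul_Lb : star (La R) * Lb R = 0 := by
  have h : star (La R) * Lb R = star (La R) * Lb R + star (La R) * Lb R :=
    calc star (La R) * Lb R = star (La R) * (La R * star (La R) + Lb R * star (Lb R)) * Lb R := by
          rw [ck_rel, mul_one]
      _ = star (La R) * La R * (star (La R) * Lb R) +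
          star (La R) * Lb R * (star (Lb R) * Lb R) := by noncomm_ring
      _ = _ := by rw [astar_a, bstar_b, one_mul, mul_one]
  exact left_eq_add.mp h

lemma star_Lb_mul_La : star (Lb R) * La R = 0 := by
  have h : star (Lb R) * La R = star (Lb R) * La R + star (Lb R) * La R :=
    calc star (Lb R) * La R = star (Lb R) * (La R * star (La R) + Lb R * star (Lb R)) * La R := by
          rw [ck_rel, mul_one]
      _ = star (Lb R) * La R * (star (La R) * La R) +
          star (Lb R) * Lb R * (star (Lb R) * La R) := by noncomm_ring
      _ = _ := by rw [astar_a, bstar_b, one_mul, mul_one]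
  exact left_eq_add.mp h

/-- `w = Σ xᵢ yᵢ*` for the two partitions of unity `{aa, ab, b}` and `{a, ba, bb}` of `L_{2,R}`
into isometries with orthogonal ranges; this is why `w` is unitary. -/
noncomputable def shiftUnitary : L2 R :=
  La R * La R * star (La R) + La R * Lb R * star (Lb R * La R) + Lb R * star (Lb R * Lb R)

lemma shiftUnitary_mem_unitary : shiftUnitary R ∈ unitary (L2 R) := by
  have ha (x : L2 R) : star (La R) * (La R * x) = x := by rw [← mul_assoc, astar_a, one_mul]
  have hb (x : L2 R) : star (Lb R) * (Lb R * x) = x := by rw [← mul_assoc, bstar_b, one_mul]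
  have hab (x : L2 R) : star (La R) * (Lb R * x) = 0 := by
    rw [← mul_assoc, star_La_mul_Lb, zero_mul]
  have hba (x : L2 R) : star (Lb R) * (La R * x) = 0 := by
    rw [← mul_assoc, star_Lb_mul_La, zero_mul]
  have hck (x : L2 R) : La R * (star (La R) * x) + Lb R * (star (Lb R) * x) = x := by
    rw [← mul_assoc, ← mul_assoc, ← add_mul, ck_rel, one_mul]
  refine Unitary.mem_iff.2 ⟨?_, ?_⟩ <;>
    simp only [shiftUnitary, star_add, star_mul, star_star, mul_add, add_mul, mul_assoc, ha, hb,
      hab, hba, mul_zero, add_zero, zero_add]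
  · rw [add_assoc, ← mul_add, hck, ck_rel]
  · rw [← mul_add, hck, ck_rel]

open Finsupp

noncomputable def pushDigit (i : ℕ) : Module.End R (ℕ →₀ R) :=
  linearCombination R fun m => single (2 * m + i) 1

noncomputable def popDigit (i : ℕ) : Module.End R (ℕ →₀ R) :=
  linearCombination R fun m => if m % 2 = i then single (m / 2) 1 else 0

variable {R}

lemma pushDigit_single (i m : ℕ) (r : R) : pushDigit R i (single m r) = single (2 * m + i) r := by
  simp [pushDigit]

lemma popDigit_single (i m : ℕ) (r : R) :
    popDigit R i (single m r) = if m % 2 = i then single (m / 2) r else 0 := by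
  simp [popDigit]

variable (R)

lemma popDigit_mul_pushDigit {i : ℕ} (hi : i < 2) : popDigit R i * pushDigit R i = 1 :=
  lhom_ext fun m r => by
    rw [Module.End.mul_apply, pushDigit_single, popDigit_single, if_pos (by omega),
      Module.End.one_apply]
    congr 1
    omega

lemma pushDigit_mul_popDigit_add :
    pushDigit R 0 * popDigit R 0 + pushDigit R 1 * popDigit R 1 = 1 :=
  lhom_ext fun m r => by
    simp only [LinearMap.add_apply, Module.End.mul_apply, popDigit_single, Module.End.one_apply]
    rcases Nat.mod_two_eq_zero_or_one m with h | h <;> simp [h, pushDigit_single] <;>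
      congr 1 <;> omega

noncomputable def dyadicRep : L2 R →ₐ[R] Module.End R (ℕ →₀ R) :=
  RingQuot.liftAlgHom R
    ⟨FreeAlgebra.lift R fun
        | .a => pushDigit R 0
        | .astar => popDigit R 0
        | .b => pushDigit R 1
        | .bstar => popDigit R 1, by
      rintro x y (_ | _ | _) <;>
        simp only [map_mul, map_add, map_one, FreeAlgebra.lift_ι_apply]
      · exact popDigit_mul_pushDigit R (by norm_num)
      · exact popDigit_mul_pushDigit R (by norm_num)
      · exact pushDigit_mul_popDigit_add R⟩

lemma dyadicRep_La : dyadicRep R (La R) = pushDigit R 0 := by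
  simp [dyadicRep, La, RingQuot.liftAlgHom_mkAlgHom_apply]

lemma dyadicRep_Lb : dyadicRep R (Lb R) = pushDigit R 1 := by
  simp [dyadicRep, Lb, RingQuot.liftAlgHom_mkAlgHom_apply]

lemma dyadicRep_star_La : dyadicRep R (star (La R)) = popDigit R 0 := by
  simp [dyadicRep, Lastar, RingQuot.liftAlgHom_mkAlgHom_apply]

lemma dyadicRep_star_Lb : dyadicRep R (star (Lb R)) = popDigit R 1 := by
  simp [dyadicRep, Lbstar, RingQuot.liftAlgHom_mkAlgHom_apply]

lemma dyadicRep_shiftUnitary_single_two_pow (j : ℕ) :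
    dyadicRep R (shiftUnitary R) (single (2 ^ j) 1) = single (2 ^ (j + 1)) 1 := by
  simp only [shiftUnitary, star_mul, map_add, map_mul, dyadicRep_La, dyadicRep_Lb,
    dyadicRep_star_La, dyadicRep_star_Lb, LinearMap.add_apply, Module.End.mul_apply]
  rcases j with _ | j
  · simp [popDigit_single, pushDigit_single]
  · rw [pow_succ' 2 j]
    simp [popDigit_single, pushDigit_single, pow_succ, mul_comm]

lemma transcendental_shiftUnitary : Transcendental R (shiftUnitary R) := by
  refine transcendental_of_linearIndependent_orbit R (dyadicRep R) _ (single 1 1) ?_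
  have hpow (n : ℕ) : (dyadicRep R (shiftUnitary R) ^ n) (single 1 1) = single (2 ^ n) 1 := by
    induction n with
    | zero => rfl
    | succ n ih => rw [pow_succ', Module.End.mul_apply, ih, dyadicRep_shiftUnitary_single_two_pow]
  simp only [hpow]
  exact Finsupp.basisSingleOne.linearIndependent.comp _ (Nat.pow_right_injective le_rfl)

end L2

theorem embed_loop_lemma_general
    (R : Type) [CommRing R] (n : ℕ) [NeZero n] (p : Fin n → L2 R)
    (hequiv : ∀ i, MvNEquiv (p i) 1) :
    ∃ t : Fin n → L2 R,
      (∀ i, star (t i) * t i = p (i + 1)) ∧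
      (∀ i, t i * star (t i) = p i) ∧
      (∀ i, t i * star (t i) * t i = t i) ∧
      (List.ofFn t).prod * star ((List.ofFn t).prod) = p 0 ∧
      star ((List.ofFn t).prod) * (List.ofFn t).prod = p 0 ∧
      IsFullSpectrumPartialUnitary R ((List.ofFn t).prod) := by
  obtain ⟨m, rfl⟩ := Nat.exists_eq_succ_of_ne_zero (NeZero.ne n)
  choose s hp hs using hequiv
  replace hs i : star (s i) * s i = 1 := (hs i).symm
  have hw := shiftUnitary_mem_unitary R
  set w := shiftUnitary R
  set t : Fin (m + 1) → L2 R := fun i => s i * w * star (s (i + 1))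
  have hprod : (List.ofFn t).prod = s 0 * w ^ (m + 1) * star (s 0) := by
    open Fin.NatCast in
    simpa [t] using prod_ofFn_mul_mul_star_succ (fun k : ℕ => s k) (fun k => hs k) w m
  have hv : (List.ofFn t).prod * star ((List.ofFn t).prod) = p 0 := by
    rw [hprod, mul_star_self_of_isometries (hs 0) (Unitary.mul_star_self_of_mem (pow_mem hw _)),
      hp]
  refine ⟨t, fun i => ?_, fun i => ?_, fun i => ?_, hv, ?_, ?_⟩
  · rw [star_mul_self_of_isometries (hs i) (Unitary.star_mul_self_of_mem hw), hp]
  · rw [mul_star_self_of_isometries (hs (i + 1)) (Unitary.mul_star_self_of_mem hw), hp]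
  · exact mul_star_self_mul_of_isometries (hs i) (hs (i + 1)) (Unitary.mul_star_self_of_mem hw)
  · rw [hprod, star_mul_self_of_isometries (hs 0) (Unitary.star_mul_self_of_mem (pow_mem hw _)),
      hp]
  · rw [hprod]
    exact isFullSpectrumPartialUnitary_conj_isometry R (hs 0) (pow_mem hw _)
      ((transcendental_shiftUnitary R).pow m.succ_pos)

/-- Given pairwise orthogonal projections `p_1, …, p_n` in `L_{2,R}`, each Murray–von
Neumann equivalent to `1`, there exist `t_1, …, t_n ∈ L_{2,R}` such that
(1) `t_i* t_i = p_{i+1}` (indices cyclic, so `t_n* t_n = p_1`); (2) `t_i t_i* = p_i`;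
(3) `t_i t_i* t_i = t_i`; and (4) `v = t_1 t_2 ⋯ t_n` is a full spectrum partial unitary
with `vv* = p_1 = v*v`. -/
theorem embed_loop_lemma
    (R : Type) [CommRing R] (n : ℕ) [NeZero n] (p : Fin n → L2 R)
    (hproj : ∀ i, IsProjection (p i))
    (horth : ∀ i j, i ≠ j → p i * p j = 0)
    (hequiv : ∀ i, MvNEquiv (p i) 1) :
    ∃ t : Fin n → L2 R,
      (∀ i, star (t i) * t i = p (i + 1)) ∧
      (∀ i, t i * star (t i) = p i) ∧
      (∀ i, t i * star (t i) * t i = t i) ∧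
      (List.ofFn t).prod * star ((List.ofFn t).prod) = p 0 ∧
      star ((List.ofFn t).prod) * (List.ofFn t).prod = p 0 ∧
      IsFullSpectrumPartialUnitary R ((List.ofFn t).prod) :=
  embed_loop_lemma_general R n p hequiv
end

section
/- Let R be a commutative ring with unit and let u = aaa* + aba*b* + bb*b* ∈ L_{2,R}. Then there is a unital R-algebra homomorphism from the Laurent polynomial ring R[z, z^{-1}] to L_{2,R} sending z to u and z^{-1} to u*, and this homomorphism is injective. -/
set_option synthInstance.maxHeartbeats 1000000
set_option maxHeartbeats 1000000

open FreeAlgebra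

variable (R : Type) [CommRing R]

open L2

/-!
`L_{2,R}` acts on `ℕ →₀ R` by `a eₙ = e₂ₙ`, `b eₙ = e₂ₙ₊₁`, with `a*`, `b*` the partial
inverses. The Cuntz relations make `u` unitary with `u⁻¹ = u*`, and on the basis vector `e₁` one
finds `uᵏ e₁ = e_{2ᵏ}` and `u⁻ᵏ e₁ = e_{2ᵏ⁺¹-1}` for `k ≥ 0`. These are pairwise distinct basis
vectors, so the powers `uⁿ`, `n ∈ ℤ`, are linearly independent over `R`, which is exactly
injectivity of `z ↦ u` on `R[z, z⁻¹]`.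
-/

open Finsupp

namespace LaurentPolynomial

variable {S A : Type*} [CommSemiring S] [Semiring A] [Algebra S A]

noncomputable def liftUnit (x : Aˣ) : S[T;T⁻¹] →ₐ[S] A :=
  AddMonoidAlgebra.lift S A ℤ ((Units.coeHom A).comp (zpowersHom Aˣ x))

lemma liftUnit_T (x : Aˣ) (n : ℤ) : liftUnit x (T n : S[T;T⁻¹]) = ((x ^ n : Aˣ) : A) := by
  rw [liftUnit, T, AddMonoidAlgebra.lift_single, one_smul]
  rfl

lemma liftUnit_injective {x : Aˣ} (hx : LinearIndependent S fun n : ℤ => ((x ^ n : Aˣ) : A)) :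
    Function.Injective (liftUnit x : S[T;T⁻¹] →ₐ[S] A) := by
  intro f g hfg
  simp only [liftUnit, AddMonoidAlgebra.lift_apply, ← linearCombination_apply] at hfg
  exact AddMonoidAlgebra.coeff_injective (hx hfg)

end LaurentPolynomial

theorem mul_eq_zero_of_cuntz {A : Type*} [Ring A] {a a' b b' : A} (ha : a' * a = 1)
    (hb : b' * b = 1) (hab : a * a' + b * b' = 1) : a' * b = 0 := by
  have h : a' * b = a' * b + a' * b :=
    calc a' * b = a' * (a * a' + b * b') * b := by rw [hab, mul_one]
      _ = (a' * a) * (a' * b) + (a' * b) * (b' * b) := by noncomm_ring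
      _ = a' * b + a' * b := by rw [ha, hb, one_mul, mul_one]
  simpa using h

namespace L2

@[simp] lemma Lastar_mul_La : Lastar R * La R = 1 := by simpa using astar_a R

@[simp] lemma Lbstar_mul_Lb : Lbstar R * Lb R = 1 := by simpa using bstar_b R

lemma La_mul_Lastar_add_Lb_mul_Lbstar : La R * Lastar R + Lb R * Lbstar R = 1 := by
  simpa using ck_rel R

@[simp] lemma Lastar_mul_Lb : Lastar R * Lb R = 0 :=
  mul_eq_zero_of_cuntz (Lastar_mul_La R) (Lbstar_mul_Lb R) (La_mul_Lastar_add_Lb_mul_Lbstar R)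

@[simp] lemma Lbstar_mul_La : Lbstar R * La R = 0 :=
  mul_eq_zero_of_cuntz (Lbstar_mul_Lb R) (Lastar_mul_La R)
    ((add_comm _ _).trans (La_mul_Lastar_add_Lb_mul_Lbstar R))

lemma La_mul_Lastar_mul_add_Lb_mul_Lbstar_mul (x : L2 R) :
    La R * (Lastar R * x) + Lb R * (Lbstar R * x) = x := by
  rw [← mul_assoc, ← mul_assoc, ← add_mul, La_mul_Lastar_add_Lb_mul_Lbstar, one_mul]

@[simp] lemma Lastar_mul_La_mul (x : L2 R) : Lastar R * (La R * x) = x := by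
  rw [← mul_assoc, Lastar_mul_La, one_mul]

@[simp] lemma Lbstar_mul_Lb_mul (x : L2 R) : Lbstar R * (Lb R * x) = x := by
  rw [← mul_assoc, Lbstar_mul_Lb, one_mul]

@[simp] lemma Lastar_mul_Lb_mul (x : L2 R) : Lastar R * (Lb R * x) = 0 := by
  rw [← mul_assoc, Lastar_mul_Lb, zero_mul]

@[simp] lemma Lbstar_mul_La_mul (x : L2 R) : Lbstar R * (La R * x) = 0 := by
  rw [← mul_assoc, Lbstar_mul_La, zero_mul]

noncomputable def u : L2 R :=
  La R * La R * star (La R) + La R * Lb R * star (La R) * star (Lb R) +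
    Lb R * star (Lb R) * star (Lb R)

lemma star_u : star (u R) =
    La R * Lastar R * Lastar R + Lb R * La R * Lbstar R * Lastar R + Lb R * Lb R * Lbstar R := by
  simp [u, mul_assoc]

lemma u_mul_star_u : u R * star (u R) = 1 := by
  rw [star_u, u]
  simp only [star_La, star_Lb, mul_add, add_mul, mul_assoc, Lastar_mul_La_mul, Lbstar_mul_Lb_mul,
    Lastar_mul_Lb_mul, Lbstar_mul_La_mul, mul_zero, add_zero, zero_add]
  rw [← mul_add, La_mul_Lastar_mul_add_Lb_mul_Lbstar_mul, La_mul_Lastar_add_Lb_mul_Lbstar]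

lemma star_u_mul_u : star (u R) * u R = 1 := by
  rw [star_u, u]
  simp only [star_La, star_Lb, mul_add, add_mul, mul_assoc, Lastar_mul_La_mul, Lbstar_mul_Lb_mul,
    Lastar_mul_Lb_mul, Lbstar_mul_La_mul, mul_zero, add_zero, zero_add]
  rw [add_assoc, ← mul_add, La_mul_Lastar_mul_add_Lb_mul_Lbstar_mul,
    La_mul_Lastar_add_Lb_mul_Lbstar]

noncomputable def uUnit : (L2 R)ˣ := ⟨u R, star (u R), u_mul_star_u R, star_u_mul_u R⟩

section Representation

variable {X : Type*} (e : X ⊕ X ≃ X)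

noncomputable def genRep : L2Gen → Module.End R (X →₀ R)
  | .a => lmapDomain R R (e ∘ Sum.inl)
  | .astar => lcomapDomain (e ∘ Sum.inl) (e.injective.comp Sum.inl_injective)
  | .b => lmapDomain R R (e ∘ Sum.inr)
  | .bstar => lcomapDomain (e ∘ Sum.inr) (e.injective.comp Sum.inr_injective)

@[simp] lemma genRep_a_single (x : X) (r : R) :
    genRep R e .a (single x r) = single (e (.inl x)) r :=
  mapDomain_single

@[simp] lemma genRep_b_single (x : X) (r : R) :
    genRep R e .b (single x r) = single (e (.inr x)) r :=
  mapDomain_single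

@[simp] lemma genRep_astar_single_inl (x : X) (r : R) :
    genRep R e .astar (single (e (.inl x)) r) = single x r :=
  comapDomain_single (e ∘ Sum.inl) x r _

@[simp] lemma genRep_astar_single_inr (x : X) (r : R) :
    genRep R e .astar (single (e (.inr x)) r) = 0 :=
  comapDomain_single_of_not_mem_range (by simp) r _

@[simp] lemma genRep_bstar_single_inr (x : X) (r : R) :
    genRep R e .bstar (single (e (.inr x)) r) = single x r :=
  comapDomain_single (e ∘ Sum.inr) x r _

@[simp] lemma genRep_bstar_single_inl (x : X) (r : R) :
    genRep R e .bstar (single (e (.inl x)) r) = 0 :=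
  comapDomain_single_of_not_mem_range (by simp) r _

lemma genRep_astar_mul_a : genRep R e .astar * genRep R e .a = 1 := by
  ext x : 2
  simp

lemma genRep_bstar_mul_b : genRep R e .bstar * genRep R e .b = 1 := by
  ext x : 2
  simp

lemma genRep_a_mul_astar_add_b_mul_bstar :
    genRep R e .a * genRep R e .astar + genRep R e .b * genRep R e .bstar = 1 := by
  ext x : 2
  obtain ⟨x | x, rfl⟩ := e.surjective x <;> simp

noncomputable def rep : L2 R →ₐ[R] Module.End R (X →₀ R) :=
  RingQuot.liftAlgHom R ⟨FreeAlgebra.lift R (genRep R e), fun _ _ h => by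
    induction h with
    | a_adj => simpa using genRep_astar_mul_a R e
    | b_adj => simpa using genRep_bstar_mul_b R e
    | ck => simpa using genRep_a_mul_astar_add_b_mul_bstar R e⟩

lemma rep_mkAlgHom_ι (g : L2Gen) :
    rep R e (RingQuot.mkAlgHom R (L2Rel R) (ι R g)) = genRep R e g := by
  rw [rep, RingQuot.liftAlgHom_mkAlgHom_apply, FreeAlgebra.lift_ι_apply]

@[simp] lemma rep_La : rep R e (La R) = genRep R e .a := rep_mkAlgHom_ι R e _

@[simp] lemma rep_Lb : rep R e (Lb R) = genRep R e .b := rep_mkAlgHom_ι R e _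

@[simp] lemma rep_Lastar : rep R e (Lastar R) = genRep R e .astar := rep_mkAlgHom_ι R e _

@[simp] lemma rep_Lbstar : rep R e (Lbstar R) = genRep R e .bstar := rep_mkAlgHom_ι R e _

lemma rep_u_single_inl (x : X) (r : R) :
    rep R e (u R) (single (e (.inl x)) r) = single (e (.inl (e (.inl x)))) r := by
  simp [u]

lemma rep_u_single_inr_inl (x : X) (r : R) :
    rep R e (u R) (single (e (.inr (e (.inl x)))) r) = single (e (.inl (e (.inr x)))) r := by
  simp [u]

lemma rep_star_u_single_inr (x : X) (r : R) :
    rep R e (star (u R)) (single (e (.inr x)) r) = single (e (.inr (e (.inr x)))) r := by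
  simp [star_u]

end Representation

section OrbitOfOne

open Equiv

lemma rep_u_pow_single_one (k : ℕ) (r : R) :
    rep R natSumNatEquivNat (u R ^ k) (single 1 r) = single (2 ^ k) r := by
  induction k with
  | zero => simp
  | succ k ih =>
    rw [pow_succ', map_mul, Module.End.mul_apply, ih]
    cases k with
    | zero => simpa [natSumNatEquivNat_apply] using rep_u_single_inr_inl R natSumNatEquivNat 0 r
    | succ k =>
      simpa [natSumNatEquivNat_apply, pow_succ, mul_comm, mul_assoc] using
        rep_u_single_inl R natSumNatEquivNat (2 ^ k) r

lemma rep_star_u_pow_single_one (k : ℕ) (r : R) :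
    rep R natSumNatEquivNat (star (u R) ^ k) (single 1 r) = single (2 ^ (k + 1) - 1) r := by
  induction k with
  | zero => simp
  | succ k ih =>
    rw [pow_succ', map_mul, Module.End.mul_apply, ih]
    have h := rep_star_u_single_inr R natSumNatEquivNat (2 ^ k - 1) r
    have hk := Nat.one_le_two_pow (n := k)
    simp only [natSumNatEquivNat_apply, Sum.elim_inr] at h
    convert h using 3 <;> simp only [pow_succ] <;> omega

def orbitIndex : ℤ → ℕ
  | .ofNat k => 2 ^ k
  | .negSucc k => 2 ^ (k + 2) - 1

lemma two_pow_ne_two_pow_add_two_sub_one (j k : ℕ) : 2 ^ j ≠ 2 ^ (k + 2) - 1 := by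
  have hk := Nat.one_le_two_pow (n := k)
  rcases j with _ | j <;> simp only [pow_succ] <;> omega

lemma orbitIndex_injective : Function.Injective orbitIndex := by
  have hpow := Nat.pow_right_injective (le_refl 2)
  rintro (j | j) (k | k) h <;> simp only [orbitIndex] at h
  · rw [hpow h]
  · exact absurd h (two_pow_ne_two_pow_add_two_sub_one j k)
  · exact absurd h.symm (two_pow_ne_two_pow_add_two_sub_one k j)
  · have := Nat.one_le_two_pow (n := j + 2)
    have := Nat.one_le_two_pow (n := k + 2)
    rw [Nat.add_right_cancel (hpow (by omega : 2 ^ (j + 2) = 2 ^ (k + 2)))]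

lemma rep_uUnit_zpow_single_one (n : ℤ) (r : R) :
    rep R natSumNatEquivNat ((uUnit R ^ n : (L2 R)ˣ) : L2 R) (single 1 r) =
      single (orbitIndex n) r := by
  cases n with
  | ofNat k => exact rep_u_pow_single_one R k r
  | negSucc k =>
    rw [zpow_negSucc, ← inv_pow, Units.val_pow_eq_pow_val]
    exact rep_star_u_pow_single_one R (k + 1) r

lemma linearIndependent_uUnit_zpow :
    LinearIndependent R fun n : ℤ => ((uUnit R ^ n : (L2 R)ˣ) : L2 R) := by
  apply LinearIndependent.of_comp
    ((LinearMap.applyₗ (single 1 1)).comp (rep R natSumNatEquivNat).toLinearMap)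
  convert (Finsupp.linearIndependent_single_one R ℕ).comp orbitIndex orbitIndex_injective using 1
  funext n
  exact rep_uUnit_zpow_single_one R n 1

end OrbitOfOne

end L2

/-- With `u = aaa* + aba*b* + bb*b* ∈ L_{2,R}`, there is a unital `R`-algebra
homomorphism `R[z, z⁻¹] → L_{2,R}` sending `z ↦ u` and `z⁻¹ ↦ u*`, and it is
injective. -/
theorem laurent_embeds_in_l2
    (R : Type) [CommRing R] :
    ∃ φ : LaurentPolynomial R →ₐ[R] L2 R,
      φ (LaurentPolynomial.T 1) =
        (La R * La R * star (La R) + La R * Lb R * star (La R) * star (Lb R) +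
          Lb R * star (Lb R) * star (Lb R)) ∧
      φ (LaurentPolynomial.T (-1)) =
        star (La R * La R * star (La R) + La R * Lb R * star (La R) * star (Lb R) +
          Lb R * star (Lb R) * star (Lb R)) ∧
      Function.Injective φ := by
  refine ⟨LaurentPolynomial.liftUnit (uUnit R), ?_, ?_,
    LaurentPolynomial.liftUnit_injective (linearIndependent_uUnit_zpow R)⟩
  · rw [LaurentPolynomial.liftUnit_T, zpow_one]
    rfl
  · rw [LaurentPolynomial.liftUnit_T, zpow_neg_one]
    rfl
end
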